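/- For n ≥ 1 and the quadrature weights R_j(t) = -(2π/n) Σ_{m=1}^{n-1} (1/m) cos[m(t − ς_j)] − (π/n²) cos[n(t − ς_j)] with nodes ς_j = πj/n (j = 0,...,2n−1), the quadrature rule Σ_{j=0}^{2n-1} R_j(t) f(ς_j) is exact for the integral ∫₀^{2π} ln(4 sin²((t−ς)/2)) f(ς) dς whenever f is a trigonometric polynomial of the form f(ς) = cos(kς) or sin(kς) with 0 ≤ k ≤ n−1. -/

import Mathlib

/-!
Both sides are evaluated on `f = cos (k · - φ)` (then `φ = 0` and `φ = π / 2`), where each equals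
`-(2π / k) cos (k t - φ)`; for `k = 0` this is `0`, which is also Lean's value of `2π / 0`.

On the discrete side, `cos (m (t - ς)) cos (k ς - φ)` is a sum of two cosines of frequencies
`k - m` and `-(m + k)`, and a cosine of integer frequency `l` sums to zero over the `2n` nodes
unless `2n ∣ l`; so only the term `m = k` of the weight survives.

On the continuous side the logarithmic kernel is reached by Abel summation: for `|r| < 1`,
`log (1 - 2 r cos u + r²) = -2 ∑ r^m cos (m u) / m` (the real part of `-2 log (1 - r e^{iu})`),
which integrates termwise to `-(2π / k) r^k cos (k t - φ)`. As `r → 1⁻` the kernel tends to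
`log (4 sin² (u / 2))` and is dominated by `log 4 - 2 log |sin u|`, which is integrable.
-/

open Real intervalIntegral

/-- The quadrature node ς_j = πj/n. -/
noncomputable def node (n j : ℕ) : ℝ := Real.pi * j / n

/-- The logarithmic quadrature weight
R_j(t) = −(2π/n)Σ_{m=1}^{n−1}(1/m)cos[m(t−ς_j)] − (π/n²)cos[n(t−ς_j)]. -/
noncomputable def Rweight (n : ℕ) (t : ℝ) (j : ℕ) : ℝ :=
  -(2 * Real.pi / n) * (∑ m ∈ Finset.Icc 1 (n - 1),
      (1 / (m : ℝ)) * Real.cos ((m : ℝ) * (t - node n j)))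
    - (Real.pi / (n : ℝ) ^ 2) * Real.cos ((n : ℝ) * (t - node n j))

open Finset MeasureTheory Filter Topology

lemma cos_mul_sub_mul_cos_mul_sub (m k : ℕ) (t s φ : ℝ) :
    cos (m * (t - s)) * cos (k * s - φ) =
      (cos (((k - m : ℤ) : ℝ) * s + (m * t - φ)) +
        cos (((-(m + k) : ℤ) : ℝ) * s + (m * t + φ))) / 2 := by
  rw [eq_div_iff two_ne_zero, mul_comm, ← mul_assoc, two_mul_cos_mul_cos, add_comm]
  push_cast
  ring_nf

lemma sum_range_cos_int_mul_node_add {n : ℕ} {l : ℤ} (hl : ¬ 2 * (n : ℤ) ∣ l) (c : ℝ) :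
    ∑ j ∈ range (2 * n), cos (l * node n j + c) = 0 := by
  rcases Nat.eq_zero_or_pos n with rfl | hn
  · simp
  have hnode (j : ℕ) : (l : ℝ) * node n j = l * π / n * j := by unfold node; ring
  simp_rw [hnode]
  rw [Real.sum_cos]
  · push_cast
    rw [show (2 * n : ℝ) * (l * π / n) / 2 = (l : ℤ) * π by field_simp, sin_int_mul_pi]
    simp
  · intro q hq
    apply hl ⟨q, ?_⟩
    field_simp at hq
    exact_mod_cast (by linarith : (l : ℝ) = 2 * n * q)

lemma sum_range_cos_mul_sub_node_mul_cos {n m k : ℕ} (hm : 0 < m) (hmk : m + k < 2 * n)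
    (t φ : ℝ) :
    ∑ j ∈ range (2 * n), cos (m * (t - node n j)) * cos (k * node n j - φ) =
      if m = k then n * cos (k * t - φ) else 0 := by
  have hnot_dvd {l : ℤ} (h0 : l ≠ 0) (hlt : |l| < 2 * n) : ¬ 2 * (n : ℤ) ∣ l :=
    fun h => h0 (Int.eq_zero_of_abs_lt_dvd h hlt)
  simp_rw [cos_mul_sub_mul_cos_mul_sub, ← sum_div, sum_add_distrib]
  rw [sum_range_cos_int_mul_node_add (l := -(m + k))
    (hnot_dvd (by omega) (abs_lt.2 ⟨by omega, by omega⟩)), add_zero]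
  split_ifs with h
  · subst h
    simp only [sub_self, Int.cast_zero, zero_mul, zero_add, sum_const, card_range, nsmul_eq_mul,
      Nat.cast_mul, Nat.cast_ofNat]
    ring
  · rw [sum_range_cos_int_mul_node_add (hnot_dvd (by omega) (abs_lt.2 ⟨by omega, by omega⟩)),
      zero_div]

lemma integral_cos_int_mul_add {l : ℤ} (hl : l ≠ 0) (c : ℝ) :
    ∫ s in (0 : ℝ)..2 * π, cos (l * s + c) = 0 := by
  have hl' : (l : ℝ) ≠ 0 := Int.cast_ne_zero.2 hl
  rw [integral_comp_mul_add cos hl', integral_cos, mul_zero, zero_add,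
    show (l : ℝ) * (2 * π) + c = c + l * (2 * π) by ring, sin_add_int_mul_two_pi, sub_self,
    smul_zero]

lemma integral_cos_mul_sub_mul_cos {m : ℕ} (hm : 0 < m) (k : ℕ) (t φ : ℝ) :
    ∫ s in (0 : ℝ)..2 * π, cos (m * (t - s)) * cos (k * s - φ) =
      if m = k then π * cos (k * t - φ) else 0 := by
  simp_rw [cos_mul_sub_mul_cos_mul_sub]
  rw [intervalIntegral.integral_div,
    intervalIntegral.integral_add (Continuous.intervalIntegrable (by fun_prop) _ _)
      (Continuous.intervalIntegrable (by fun_prop) _ _),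
    integral_cos_int_mul_add (l := -(m + k)) (by omega), add_zero]
  split_ifs with h
  · subst h
    simp only [sub_self, Int.cast_zero, zero_mul, zero_add, intervalIntegral.integral_const,
      sub_zero, smul_eq_mul]
    ring
  · rw [integral_cos_int_mul_add (by omega), zero_div]

lemma sum_Rweight_mul_cos {n k : ℕ} (hk : k < n) (t φ : ℝ) :
    ∑ j ∈ range (2 * n), Rweight n t j * cos (k * node n j - φ) =
      -(2 * π / k) * cos (k * t - φ) := by
  have hn : (n : ℝ) ≠ 0 := Nat.cast_ne_zero.2 (by omega)
  have hweights : ∑ j ∈ range (2 * n), Rweight n t j * cos (k * node n j - φ) =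
      -(2 * π / n) * ∑ m ∈ Icc 1 (n - 1), 1 / (m : ℝ) *
          ∑ j ∈ range (2 * n), cos (m * (t - node n j)) * cos (k * node n j - φ)
        - π / (n : ℝ) ^ 2 *
          ∑ j ∈ range (2 * n), cos (n * (t - node n j)) * cos (k * node n j - φ) := by
    simp only [Rweight, sub_mul, sum_sub_distrib, mul_sum, sum_mul, mul_assoc]
    rw [sum_comm]
  have horth : ∀ m ∈ Icc 1 (n - 1), 1 / (m : ℝ) *
      ∑ j ∈ range (2 * n), cos (m * (t - node n j)) * cos (k * node n j - φ) =
        if m = k then 1 / (k : ℝ) * (n * cos (k * t - φ)) else 0 := by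
    intro m hm
    have hm' := mem_Icc.1 hm
    rw [sum_range_cos_mul_sub_node_mul_cos (by omega) (by omega)]
    split_ifs with h <;> simp [h]
  rw [hweights, sum_range_cos_mul_sub_node_mul_cos (by omega) (by omega), if_neg hk.ne',
    mul_zero, sub_zero, sum_congr rfl horth, sum_ite_eq']
  split_ifs with hk0
  · field_simp
  · obtain rfl : k = 0 := by rw [mem_Icc] at hk0; omega
    simp

lemma hasSum_log_one_sub_two_mul_cos_add_sq {r : ℝ} (hr : |r| < 1) (u : ℝ) :
    HasSum (fun m : ℕ => -(2 / m) * r ^ m * cos (m * u)) (log (1 - 2 * r * cos u + r ^ 2)) := by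
  set z : ℂ := r * Complex.exp (u * Complex.I)
  have hz : ‖z‖ < 1 := by simpa [z, Complex.norm_exp_ofReal_mul_I] using hr
  have hterm (m : ℕ) : (z ^ m / m).re = r ^ m * cos (m * u) / m := by
    have : z ^ m / m = ((r ^ m / m : ℝ) : ℂ) * Complex.exp ((m * u : ℝ) * Complex.I) := by
      rw [mul_pow, ← Complex.exp_nat_mul]
      push_cast
      ring_nf
    rw [this, Complex.re_ofReal_mul, Complex.exp_ofReal_mul_I_re]
    ring
  have hnorm : ‖1 - z‖ ^ 2 = 1 - 2 * r * cos u + r ^ 2 := by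
    rw [Complex.sq_norm, Complex.normSq_apply]
    simp only [z, Complex.sub_re, Complex.sub_im, Complex.one_re, Complex.one_im, Complex.mul_re,
      Complex.mul_im, Complex.ofReal_re, Complex.ofReal_im, Complex.exp_ofReal_mul_I_re,
      Complex.exp_ofReal_mul_I_im, zero_mul, sub_zero, add_zero, zero_sub, mul_neg, neg_mul,
      neg_neg]
    nlinarith [sin_sq_add_cos_sq u]
  have hlog : log (1 - 2 * r * cos u + r ^ 2) = -2 * (-Complex.log (1 - z)).re := by
    rw [Complex.neg_re, Complex.log_re, ← hnorm, log_pow]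
    push_cast
    ring
  rw [hlog]
  refine ((Complex.hasSum_re (Complex.hasSum_taylorSeries_neg_log hz)).mul_left (-2)).congr_fun
    fun m => ?_
  rw [hterm]
  ring

lemma integral_log_one_sub_two_mul_cos_add_sq_mul_cos {r : ℝ} (hr : |r| < 1) (k : ℕ) (t φ : ℝ) :
    ∫ s in (0 : ℝ)..2 * π, log (1 - 2 * r * cos (t - s) + r ^ 2) * cos (k * s - φ) =
      -(2 * π / k) * r ^ k * cos (k * t - φ) := by
  have hterm (m : ℕ) :
      ∫ s in (0 : ℝ)..2 * π, -(2 / m) * r ^ m * cos (m * (t - s)) * cos (k * s - φ) =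
        if m = k then -(2 * π / k) * r ^ k * cos (k * t - φ) else 0 := by
    simp_rw [mul_assoc, intervalIntegral.integral_const_mul]
    rcases Nat.eq_zero_or_pos m with rfl | hm
    · split_ifs with h
      · simp [← h]
      · simp
    · rw [integral_cos_mul_sub_mul_cos hm]
      split_ifs with h
      · subst h
        ring
      · simp
  have hsum : HasSum
      (fun m : ℕ => ∫ s in (0 : ℝ)..2 * π, -(2 / m) * r ^ m * cos (m * (t - s)) * cos (k * s - φ))
      (∫ s in (0 : ℝ)..2 * π, log (1 - 2 * r * cos (t - s) + r ^ 2) * cos (k * s - φ)) := by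
    refine intervalIntegral.hasSum_integral_of_dominated_convergence (fun m _ => 2 * |r| ^ m)
      (fun m => (Continuous.aestronglyMeasurable (by fun_prop))) (fun m => ae_of_all _ ?_)
      (ae_of_all _ fun _ _ => (summable_geometric_of_lt_one (abs_nonneg r) hr).mul_left 2)
      intervalIntegrable_const
      (ae_of_all _ fun s _ => (hasSum_log_one_sub_two_mul_cos_add_sq hr (t - s)).mul_right _)
    intro s _
    simp only [norm_mul, norm_pow, Real.norm_eq_abs]
    have h2m : |-(2 / (m : ℝ))| ≤ 2 := by
      rcases Nat.eq_zero_or_pos m with rfl | hm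
      · simp
      · rw [abs_neg, abs_of_nonneg (by positivity), div_le_iff₀ (by positivity)]
        have : (1 : ℝ) ≤ m := by exact_mod_cast hm
        linarith
    have := abs_cos_le_one (m * (t - s))
    have := abs_cos_le_one (k * s - φ)
    have : 0 ≤ |r| ^ m := by positivity
    calc |-(2 / (m : ℝ))| * |r| ^ m * |cos (m * (t - s))| * |cos (k * s - φ)|
        ≤ 2 * |r| ^ m * 1 * 1 := by gcongr
      _ = 2 * |r| ^ m := by ring
  rw [funext hterm] at hsum
  exact hsum.unique (hasSum_ite_eq k _)

lemma abs_log_one_sub_two_mul_cos_add_sq_le {r u : ℝ} (hr : |r| ≤ 1) (hu : sin u ≠ 0) :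
    |log (1 - 2 * r * cos u + r ^ 2)| ≤ log 4 - 2 * log (sin u) := by
  have hsin_pos : 0 < sin u ^ 2 := by positivity
  have hlower : sin u ^ 2 ≤ 1 - 2 * r * cos u + r ^ 2 := by
    nlinarith [sin_sq_add_cos_sq u, sq_nonneg (r - cos u)]
  have hupper : 1 - 2 * r * cos u + r ^ 2 ≤ 4 := by
    have := abs_le.1 hr
    nlinarith [neg_one_le_cos u, cos_le_one u]
  have hlog_sq : log (sin u ^ 2) = 2 * log (sin u) := by
    rw [log_pow, Nat.cast_ofNat]
  have hlog_sin : log (sin u ^ 2) ≤ 0 := log_nonpos hsin_pos.le (sin_sq_le_one u)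
  have hlog4 : 0 ≤ log 4 := log_nonneg (by norm_num)
  rw [abs_le]
  constructor
  · have := log_le_log hsin_pos hlower
    linarith
  · have := log_le_log (hsin_pos.trans_le hlower) hupper
    linarith

lemma ae_sin_sub_ne_zero (t : ℝ) : ∀ᵐ s : ℝ, sin (t - s) ≠ 0 := by
  have hzeros : {s : ℝ | ¬ sin (t - s) ≠ 0} ⊆ Set.range fun q : ℤ => t - q * π := by
    intro s hs
    obtain ⟨q, hq⟩ := sin_eq_zero_iff.1 (not_not.1 hs)
    exact ⟨q, by linarith⟩
  exact measure_mono_null hzeros ((Set.countable_range _).measure_zero _)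

theorem integral_log_four_mul_sin_sq_mul_cos (k : ℕ) (t φ : ℝ) :
    ∫ s in (0 : ℝ)..2 * π, log (4 * sin ((t - s) / 2) ^ 2) * cos (k * s - φ) =
      -(2 * π / k) * cos (k * t - φ) := by
  have hIoo : ∀ᶠ r in 𝓝[<] (1 : ℝ), r ∈ Set.Ioo (-1) 1 := Ioo_mem_nhdsLT (by norm_num)
  have habel : Tendsto
      (fun r => ∫ s in (0 : ℝ)..2 * π, log (1 - 2 * r * cos (t - s) + r ^ 2) * cos (k * s - φ))
      (𝓝[<] 1) (𝓝 (∫ s in (0 : ℝ)..2 * π, log (4 * sin ((t - s) / 2) ^ 2) * cos (k * s - φ))) := by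
    refine intervalIntegral.tendsto_integral_filter_of_dominated_convergence
      (fun s => log 4 - 2 * log (sin (t - s))) (.of_forall fun r => ?_) ?_ ?_ ?_
    · exact Measurable.aestronglyMeasurable (by fun_prop)
    · filter_upwards [hIoo] with r hr
      filter_upwards [ae_sin_sub_ne_zero t] with s hs _
      rw [norm_mul, Real.norm_eq_abs, Real.norm_eq_abs]
      exact (mul_le_of_le_one_right (abs_nonneg _) (abs_cos_le_one _)).trans
        (abs_log_one_sub_two_mul_cos_add_sq_le (abs_le.2 ⟨hr.1.le, hr.2.le⟩) hs)
    · have := (intervalIntegrable_log_sin (a := t - 0) (b := t - 2 * π)).comp_sub_left t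
      simp only [sub_sub_cancel, sub_zero, sub_self, Function.comp_def] at this
      exact intervalIntegrable_const.sub (this.const_mul 2)
    · filter_upwards [ae_sin_sub_ne_zero t] with s hs _
      have hlimit : 1 - 2 * 1 * cos (t - s) + 1 ^ 2 = 4 * sin ((t - s) / 2) ^ 2 := by
        rw [sin_sq_eq_half_sub, mul_div_cancel₀ _ two_ne_zero]
        ring
      have hpos : 1 - 2 * 1 * cos (t - s) + 1 ^ 2 ≠ 0 := by
        nlinarith [cos_le_one (t - s), sin_sq_add_cos_sq (t - s), sq_pos_of_ne_zero hs]
      rw [← hlimit]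
      refine Tendsto.mul_const _ ((continuousAt_log hpos).tendsto.comp ?_)
      exact tendsto_nhdsWithin_of_tendsto_nhds (Continuous.tendsto (by fun_prop) 1)
  have hclosed : Tendsto
      (fun r => ∫ s in (0 : ℝ)..2 * π, log (1 - 2 * r * cos (t - s) + r ^ 2) * cos (k * s - φ))
      (𝓝[<] 1) (𝓝 (-(2 * π / k) * cos (k * t - φ))) := by
    refine Tendsto.congr' (hIoo.mono fun r hr =>
      (integral_log_one_sub_two_mul_cos_add_sq_mul_cos (abs_lt.2 hr) k t φ).symm) ?_
    have := (continuous_id.pow k).const_mul (-(2 * π / k)) |>.mul_const (cos (k * t - φ))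
      |>.tendsto 1
    simpa using tendsto_nhdsWithin_of_tendsto_nhds this
  exact tendsto_nhds_unique habel hclosed

theorem log_quadrature_exact_general (n : ℕ) (t : ℝ) (k : ℕ) (hk : k < n) :
    (∑ j ∈ Finset.range (2 * n), Rweight n t j * Real.cos ((k : ℝ) * node n j))
      = (∫ ς in (0 : ℝ)..(2 * Real.pi),
          Real.log (4 * Real.sin ((t - ς) / 2) ^ 2) * Real.cos ((k : ℝ) * ς)) ∧
    (∑ j ∈ Finset.range (2 * n), Rweight n t j * Real.sin ((k : ℝ) * node n j))
      = (∫ ς in (0 : ℝ)..(2 * Real.pi),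
          Real.log (4 * Real.sin ((t - ς) / 2) ^ 2) * Real.sin ((k : ℝ) * ς)) := by
  have hexact (φ : ℝ) := (sum_Rweight_mul_cos hk t φ).trans
    (integral_log_four_mul_sin_sq_mul_cos k t φ).symm
  constructor
  · simpa only [sub_zero] using hexact 0
  · simpa only [cos_sub_pi_div_two] using hexact (π / 2)

/-- The quadrature rule Σ_j R_j(t) f(ς_j) is exact for
∫₀^{2π} ln(4sin²((t−ς)/2)) f(ς) dς whenever f(ς) = cos(kς) or sin(kς)
with 0 ≤ k ≤ n−1. -/
theorem log_quadrature_exact (n : ℕ) (hn : 1 ≤ n) (t : ℝ) (k : ℕ) (hk : k < n) :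
    (∑ j ∈ Finset.range (2 * n), Rweight n t j * Real.cos ((k : ℝ) * node n j))
      = (∫ ς in (0 : ℝ)..(2 * Real.pi),
          Real.log (4 * Real.sin ((t - ς) / 2) ^ 2) * Real.cos ((k : ℝ) * ς)) ∧
    (∑ j ∈ Finset.range (2 * n), Rweight n t j * Real.sin ((k : ℝ) * node n j))
      = (∫ ς in (0 : ℝ)..(2 * Real.pi),
          Real.log (4 * Real.sin ((t - ς) / 2) ^ 2) * Real.sin ((k : ℝ) * ς)) :=
  log_quadrature_exact_general n t k hk
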